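/- Suppose q is an irreducible translation-invariant transition kernel on ℤ with q^s(0,0) ≤ C·s^{-1/2} for all s ≥ 1. Then for every i ∈ ℤ there exists a constant A(i) < ∞ such that ∑_{k=s}^{∞} [qᵏ(0,0) − qᵏ(i,0)] ≤ A(i)·s^{-1/2} for all s ≥ 1. -/
import Mathlib

open Function Finset

private lemma fin_summable {β : Type*} {f : β → ℝ} (h : (Function.support f).Finite) :
    Summable f :=
  summable_of_ne_finset_zero (s := h.toFinset) fun b hb =>
    not_not.1 fun hf => hb (h.mem_toFinset.2 hf)

/-- `k`-step transition probabilities of the translation-invariant walk on `ℤ`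
with one-step displacement law `q`, i.e. kernel `(i,j) ↦ q (j-i)`. -/
noncomputable def kstep (q : ℤ → ℝ) : ℕ → ℤ → ℤ → ℝ
  | 0, i, j => if i = j then 1 else 0
  | k + 1, i, j => ∑' z : ℤ, kstep q k i z * q (j - z)

private lemma kstep_nonneg {q : ℤ → ℝ} (hq : ∀ k, 0 ≤ q k) :
    ∀ (k : ℕ) (i j : ℤ), 0 ≤ kstep q k i j
  | 0, i, j => by simp only [kstep]; split_ifs <;> norm_num
  | (k+1), i, j => by
      simp only [kstep]
      exact tsum_nonneg fun z => mul_nonneg (kstep_nonneg hq k i z) (hq _)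

private lemma kstep_supp {q : ℤ → ℝ} (hq_fin : (Function.support q).Finite) :
    ∀ (k : ℕ) (i : ℤ), (Function.support (kstep q k i)).Finite
  | 0, i => by
      apply (Set.finite_singleton i).subset
      intro j hj
      simp only [Function.mem_support, kstep] at hj
      have hij : i = j := by by_contra h; exact hj (if_neg h)
      exact Set.mem_singleton_iff.2 hij.symm
  | (k+1), i => by
      apply Set.Finite.subset
        (Set.Finite.biUnion (kstep_supp hq_fin k i)
          (fun z _ => hq_fin.image (z + ·)))
      intro j hj
      simp only [Function.mem_support, kstep] at hj
      have : ∃ z, kstep q k i z * q (j - z) ≠ 0 := by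
        by_contra h
        push_neg at h
        exact hj (by rw [tsum_congr h, tsum_zero])
      obtain ⟨z, hz⟩ := this
      have h1 : kstep q k i z ≠ 0 := fun h => hz (by simp [h])
      have h2 : q (j - z) ≠ 0 := fun h => hz (by simp [h])
      exact Set.mem_biUnion h1 ⟨j - z, h2, by ring⟩

private lemma kstep_summable {q : ℤ → ℝ} (hq_fin : (Function.support q).Finite)
    (k : ℕ) (i : ℤ) : Summable (kstep q k i) :=
  fin_summable (kstep_supp hq_fin k i)

private lemma kstep_rowsum {q : ℤ → ℝ} (hq_fin : (Function.support q).Finite)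
    (hq_sum : ∑' k : ℤ, q k = 1) :
    ∀ (k : ℕ) (i : ℤ), ∑' j, kstep q k i j = 1
  | 0, i => by
      rw [tsum_eq_single i (fun j hj => by simp only [kstep]; exact if_neg fun h => hj h.symm)]
      simp [kstep]
  | (k+1), i => by
      have hcomm : ∑' (j : ℤ), ∑' (z : ℤ), kstep q k i z * q (j - z)
          = ∑' (z : ℤ), ∑' (j : ℤ), kstep q k i z * q (j - z) := by
        apply Summable.tsum_comm
        apply fin_summable
        apply Set.Finite.subset
          (Set.Finite.biUnion (kstep_supp hq_fin k i)
            (fun z _ => (Set.finite_singleton z).prod (hq_fin.image (z + ·))))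
        intro p hp
        simp only [Function.mem_support, Function.uncurry] at hp
        have h1 : kstep q k i p.1 ≠ 0 := fun h => hp (by simp [h])
        have h2 : q (p.2 - p.1) ≠ 0 := fun h => hp (by simp [h])
        exact Set.mem_biUnion h1 ⟨rfl, ⟨p.2 - p.1, h2, by ring⟩⟩
      have hshift : ∀ z : ℤ, ∑' (j : ℤ), q (j - z) = 1 := fun z => by
        rw [← hq_sum]; exact (Equiv.subRight z).tsum_eq q
      simp only [kstep]
      rw [hcomm]
      calc ∑' (z : ℤ), ∑' (j : ℤ), kstep q k i z * q (j - z)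
          = ∑' (z : ℤ), kstep q k i z * ∑' (j : ℤ), q (j - z) :=
            tsum_congr fun z => tsum_mul_left
        _ = ∑' (z : ℤ), kstep q k i z := by simp only [hshift, mul_one]
        _ = 1 := kstep_rowsum hq_fin hq_sum k i

private lemma kstep_chapman {q : ℤ → ℝ} (hq_fin : (Function.support q).Finite) (m : ℕ) :
    ∀ (k : ℕ) (i j : ℤ), kstep q (m + k) i j = ∑' z, kstep q m i z * kstep q k z j
  | 0, i, j => by
      rw [Nat.add_zero,
        tsum_eq_single j (fun z hz => by simp only [kstep]; rw [if_neg hz, mul_zero])]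
      simp [kstep]
  | (k+1), i, j => by
      have hstep : m + (k+1) = (m + k) + 1 := rfl
      rw [hstep]
      simp only [kstep]
      have h1 : ∀ u : ℤ, kstep q (m + k) i u * q (j - u)
          = ∑' z, kstep q m i z * kstep q k z u * q (j - u) := fun u => by
        rw [kstep_chapman hq_fin m k i u, ← tsum_mul_right]
      rw [tsum_congr h1]
      have hcomm : ∑' (u : ℤ), ∑' (z : ℤ), kstep q m i z * kstep q k z u * q (j - u)
          = ∑' (z : ℤ), ∑' (u : ℤ), kstep q m i z * kstep q k z u * q (j - u) := by
        apply Summable.tsum_comm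
        apply fin_summable
        apply Set.Finite.subset
          (((kstep_supp hq_fin m i).prod (hq_fin.image (fun w => j - w))))
        intro p hp
        simp only [Function.mem_support, Function.uncurry] at hp
        have h1 : kstep q m i p.1 ≠ 0 := fun h => hp (by simp [h])
        have h2 : q (j - p.2) ≠ 0 := fun h => hp (by simp [h])
        exact ⟨h1, ⟨j - p.2, h2, by ring⟩⟩
      rw [hcomm]
      apply tsum_congr
      intro z
      rw [← tsum_mul_left]
      apply tsum_congr
      intro u
      ring

private lemma kstep_key {q : ℤ → ℝ} (hq_nonneg : ∀ k, 0 ≤ q k)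
    (hq_fin : (Function.support q).Finite) (hq_sum : ∑' k : ℤ, q k = 1)
    (hmax : ∀ (k : ℕ) (i : ℤ), kstep q k i 0 ≤ kstep q k 0 0)
    (m k : ℕ) (i : ℤ) :
    kstep q m 0 i * (kstep q k 0 0 - kstep q k i 0)
      ≤ kstep q k 0 0 - kstep q (m + k) 0 0 := by
  have hs2 : Summable (fun z => kstep q m 0 z * kstep q k 0 0) :=
    (kstep_summable hq_fin m 0).mul_right _
  have hs1 : Summable (fun z => kstep q m 0 z * kstep q k z 0) := by
    apply fin_summable
    apply (kstep_supp hq_fin m 0).subset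
    intro z hz
    simp only [Function.mem_support] at hz ⊢
    exact fun h => hz (by simp [h])
  have hsd : Summable (fun z => kstep q m 0 z * (kstep q k 0 0 - kstep q k z 0)) := by
    simpa [mul_sub] using hs2.sub hs1
  have hle : kstep q m 0 i * (kstep q k 0 0 - kstep q k i 0)
      ≤ ∑' z, kstep q m 0 z * (kstep q k 0 0 - kstep q k z 0) :=
    Summable.le_tsum hsd i fun z _ =>
      mul_nonneg (kstep_nonneg hq_nonneg m 0 z) (sub_nonneg.2 (hmax k z))
  refine hle.trans (le_of_eq ?_)
  have h2 : ∑' z, kstep q m 0 z * kstep q k 0 0 = kstep q k 0 0 := by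
    rw [tsum_mul_right, kstep_rowsum hq_fin hq_sum m 0, one_mul]
  calc ∑' z, kstep q m 0 z * (kstep q k 0 0 - kstep q k z 0)
      = ∑' z, (kstep q m 0 z * kstep q k 0 0 - kstep q m 0 z * kstep q k z 0) := by
        simp only [mul_sub]
    _ = (∑' z, kstep q m 0 z * kstep q k 0 0) - ∑' z, kstep q m 0 z * kstep q k z 0 :=
        Summable.tsum_sub hs2 hs1
    _ = kstep q k 0 0 - kstep q (m + k) 0 0 := by
        rw [h2, kstep_chapman hq_fin m k 0 0]

private lemma telescope_bound {M : ℕ → ℝ} (hM : ∀ j, 0 ≤ M j) (s d n : ℕ) :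
    ∑ k ∈ Finset.range n, (M (s + k) - M (s + k + d))
      ≤ ∑ k ∈ Finset.range d, M (s + k) := by
  rw [Finset.sum_sub_distrib, sub_le_iff_le_add]
  have e1 : ∑ k ∈ Finset.range n, M (s + k) = ∑ j ∈ Finset.Ico s (s + n), M j := by
    rw [Finset.sum_Ico_eq_sum_range]; simp
  have e2 : ∑ k ∈ Finset.range n, M (s + k + d) = ∑ j ∈ Finset.Ico (s + d) (s + d + n), M j := by
    rw [Finset.sum_Ico_eq_sum_range]
    simp only [Nat.add_sub_cancel_left]
    apply Finset.sum_congr rfl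
    intro x _
    congr 1
    omega
  have e3 : ∑ k ∈ Finset.range d, M (s + k) = ∑ j ∈ Finset.Ico s (s + d), M j := by
    rw [Finset.sum_Ico_eq_sum_range]; simp
  rw [e1, e2, e3]
  rcases le_total n d with h | h
  · have hsub : Finset.Ico s (s + n) ⊆ Finset.Ico s (s + d) :=
      Finset.Ico_subset_Ico le_rfl (by omega)
    have := Finset.sum_le_sum_of_subset_of_nonneg hsub (fun j _ _ => hM j)
    have hnn : (0:ℝ) ≤ ∑ j ∈ Finset.Ico (s + d) (s + d + n), M j :=
      Finset.sum_nonneg fun j _ => hM j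
    linarith
  · rw [← Finset.sum_Ico_consecutive M (by omega : s ≤ s + d) (by omega : s + d ≤ s + n)]
    have hsub : Finset.Ico (s + d) (s + n) ⊆ Finset.Ico (s + d) (s + d + n) :=
      Finset.Ico_subset_Ico le_rfl (by omega)
    have := Finset.sum_le_sum_of_subset_of_nonneg hsub (fun j _ _ => hM j)
    linarith

/-- If `q` is an irreducible translation-invariant kernel on `ℤ`
(arising from a finitely supported probability vector, with
`qᵏ(i,0) ≤ qᵏ(0,0)`) satisfying `q^s(0,x) ≤ C s^{-1/2}`, then for every `i`
there is `A(i) < ∞` with `∑_{k≥s} [qᵏ(0,0) − qᵏ(i,0)] ≤ A(i) s^{-1/2}` for all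
`s ≥ 1`. -/
theorem tail_potential_bound
    (q : ℤ → ℝ) (C : ℝ)
    (hq_nonneg : ∀ k, 0 ≤ q k)
    (hq_sum : ∑' k : ℤ, q k = 1)
    (hq_fin : (Function.support q).Finite)
    (hmax : ∀ (k : ℕ) (i : ℤ), kstep q k i 0 ≤ kstep q k 0 0)
    (hirr : ∀ j : ℤ, ∃ d : ℕ, 1 ≤ d ∧ 0 < kstep q d 0 j)
    (hbound : ∀ s : ℕ, 1 ≤ s → ∀ x : ℤ,
      kstep q s 0 x ≤ C / Real.sqrt s) :
    ∀ i : ℤ, ∃ A : ℝ,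
      ∀ s : ℕ, 1 ≤ s →
        (∑' k : ℕ, (kstep q (s + k) 0 0 - kstep q (s + k) i 0)) ≤
          A / Real.sqrt s := by
  intro i
  obtain ⟨d, hd1, hdpos⟩ := hirr i
  set ε : ℝ := kstep q d 0 i with hε
  refine ⟨d * C / ε, ?_⟩
  intro s hs
  have hspos : (0:ℝ) < Real.sqrt s := Real.sqrt_pos.2 (by exact_mod_cast hs)
  have hC : 0 ≤ C := by
    have := hbound 1 le_rfl 0
    have h0 := kstep_nonneg hq_nonneg 1 0 0
    rw [Nat.cast_one, Real.sqrt_one, div_one] at this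
    linarith
  -- pointwise bound on M j for j ≥ s
  have hMle : ∀ j : ℕ, s ≤ j → kstep q j 0 0 ≤ C / Real.sqrt s := by
    intro j hj
    refine (hbound j (le_trans hs hj) 0).trans ?_
    gcongr
  have hfnonneg : ∀ k : ℕ, 0 ≤ kstep q (s + k) 0 0 - kstep q (s + k) i 0 :=
    fun k => sub_nonneg.2 (hmax (s + k) i)
  apply Real.tsum_le_of_sum_range_le hfnonneg
  intro n
  -- key pointwise inequality
  have hkey : ∀ k : ℕ, ε * (kstep q k 0 0 - kstep q k i 0)
      ≤ kstep q k 0 0 - kstep q (k + d) 0 0 := by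
    intro k
    have := kstep_key hq_nonneg hq_fin hq_sum hmax d k i
    rw [Nat.add_comm d k] at this
    exact this
  have hsum1 : ε * ∑ k ∈ Finset.range n, (kstep q (s + k) 0 0 - kstep q (s + k) i 0)
      ≤ ∑ k ∈ Finset.range n, (kstep q (s + k) 0 0 - kstep q (s + k + d) 0 0) := by
    rw [Finset.mul_sum]
    exact Finset.sum_le_sum fun k _ => hkey (s + k)
  have hsum2 : ∑ k ∈ Finset.range n, (kstep q (s + k) 0 0 - kstep q (s + k + d) 0 0)
      ≤ ∑ k ∈ Finset.range d, kstep q (s + k) 0 0 :=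
    telescope_bound (fun j => kstep_nonneg hq_nonneg j 0 0) s d n
  have hsum3 : ∑ k ∈ Finset.range d, kstep q (s + k) 0 0 ≤ d * (C / Real.sqrt s) := by
    have := Finset.sum_le_card_nsmul (Finset.range d) (fun k => kstep q (s + k) 0 0)
      (C / Real.sqrt s) (fun k _ => hMle (s + k) (Nat.le_add_right s k))
    simpa [nsmul_eq_mul] using this
  have hfinal : ε * ∑ k ∈ Finset.range n, (kstep q (s + k) 0 0 - kstep q (s + k) i 0)
      ≤ d * C / Real.sqrt s := by
    rw [mul_div_assoc]
    linarith
  rw [div_right_comm]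
  have hεpos : 0 < ε := hdpos
  calc ∑ k ∈ Finset.range n, (kstep q (s + k) 0 0 - kstep q (s + k) i 0)
      = ε * (∑ k ∈ Finset.range n, (kstep q (s + k) 0 0 - kstep q (s + k) i 0)) / ε := by
        field_simp
    _ ≤ (d * C / Real.sqrt s) / ε := by gcongr
    _ = d * C / Real.sqrt s / ε := rfl
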